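/- Let K be a metric space, f : K → ℝ^{a+b} continuous, written f = f₁ ⊕ f₂ with f₁ : K → ℝ^a and f₂ : K → ℝ^b. Suppose there is δ > 0 such that f₁ is injective on every ball of radius δ, and there is μ > 0 such that |f(x) − f(y)| > μ whenever d(x,y) ≥ δ. If g₂ : K → ℝ^b satisfies |f₂(x) − g₂(x)| < μ/3 for all x, then f₁ ⊕ g₂ is injective. -/

import Mathlib

/-!
If `f₁ x = f₁ y` and `g₂ x = g₂ y` with `x ≠ y`, local injectivity of `f₁` forces `d(x, y) ≥ δ`,
hence `|f x - f y| > μ`. But when the `f₁`-blocks agree, `|f x - f y| = |f₂ x - f₂ y|`, and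
`g₂` identifying the two points puts `f₂ x` and `f₂ y` within `2μ/3` of each other.
-/

open Function

theorem EuclideanSpace.dist_sq_eq_dist_sq_castAdd_add_dist_sq_natAdd {𝕜 : Type*} [RCLike 𝕜]
    {a b : ℕ} (v w : EuclideanSpace 𝕜 (Fin (a + b))) :
    dist v w ^ 2 =
      dist (WithLp.toLp 2 fun i : Fin a => v (Fin.castAdd b i))
          (WithLp.toLp 2 fun i : Fin a => w (Fin.castAdd b i)) ^ 2 +
        dist (WithLp.toLp 2 fun i : Fin b => v (Fin.natAdd a i))
          (WithLp.toLp 2 fun i : Fin b => w (Fin.natAdd a i)) ^ 2 := by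
  simp only [EuclideanSpace.dist_sq_eq, Fin.sum_univ_add]

theorem EuclideanSpace.dist_eq_dist_natAdd_of_castAdd_eq {𝕜 : Type*} [RCLike 𝕜]
    {a b : ℕ} {v w : EuclideanSpace 𝕜 (Fin (a + b))}
    (h : (fun i : Fin a => v (Fin.castAdd b i)) = fun i : Fin a => w (Fin.castAdd b i)) :
    dist v w =
      dist (WithLp.toLp 2 fun i : Fin b => v (Fin.natAdd a i))
        (WithLp.toLp 2 fun i : Fin b => w (Fin.natAdd a i)) := by
  have hsq := dist_sq_eq_dist_sq_castAdd_add_dist_sq_natAdd v w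
  rw [h, dist_self, zero_pow two_ne_zero, zero_add] at hsq
  exact (pow_left_inj₀ dist_nonneg dist_nonneg two_ne_zero).mp hsq

theorem Function.Injective.prodMk_of_perturbation {K P Y Z : Type*} [PseudoMetricSpace K]
    [PseudoMetricSpace Y] [PseudoMetricSpace Z] {F : K → Z} {p : K → P} {q g : K → Y}
    {δ μ : ℝ} (hloc : ∀ x y, dist x y < δ → p x = p y → x = y)
    (hsep : ∀ x y, δ ≤ dist x y → μ < dist (F x) (F y))
    (hFq : ∀ x y, p x = p y → dist (F x) (F y) ≤ dist (q x) (q y))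
    (happrox : ∀ x, dist (q x) (g x) < μ / 3) :
    Injective fun x => (p x, g x) := by
  intro x y hxy
  obtain ⟨hp, hg⟩ := Prod.mk.inj hxy
  by_contra hne
  have hfar : δ ≤ dist x y := not_lt.mp fun hclose => hne (hloc x y hclose hp)
  have hnear : dist (q x) (q y) < 2 * (μ / 3) := calc
    dist (q x) (q y) ≤ dist (q x) (g x) + dist (q y) (g y) := by
      rw [hg]; exact dist_triangle_right _ _ _
    _ < μ / 3 + μ / 3 := add_lt_add (happrox x) (happrox y)
    _ = 2 * (μ / 3) := by ring
  -- a `μ/3`-approximation forces `μ > 0`, so `2μ/3 < μ`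
  have hμ : 0 < μ := by linarith [dist_nonneg.trans_lt (happrox x)]
  linarith [hsep x y hfar, hFq x y hp]

theorem concat_perturbation_injective_general (a b : ℕ) (K : Type*) [MetricSpace K]
    (f : K → EuclideanSpace ℝ (Fin (a + b)))
    (δ μ : ℝ)
    (hloc : ∀ x y : K, dist x y < δ →
      (fun i : Fin a => f x (Fin.castAdd b i)) = (fun i : Fin a => f y (Fin.castAdd b i)) →
      x = y)
    (hsep : ∀ x y : K, δ ≤ dist x y → μ < ‖f x - f y‖)
    (g₂ : K → EuclideanSpace ℝ (Fin b))
    (happrox : ∀ x : K,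
      ‖(show EuclideanSpace ℝ (Fin b) from WithLp.toLp 2 (fun i : Fin b => f x (Fin.natAdd a i))) - g₂ x‖
        < μ / 3) :
    Function.Injective (fun x : K =>
      ((show EuclideanSpace ℝ (Fin a) from WithLp.toLp 2 (fun i : Fin a => f x (Fin.castAdd b i))),
        g₂ x)) := by
  refine Injective.prodMk_of_perturbation (F := f)
    (q := fun x => WithLp.toLp 2 fun i => f x (Fin.natAdd a i))
    (fun x y hxy hp => hloc x y hxy (WithLp.toLp_injective 2 hp))
    (fun x y hxy => by simpa only [dist_eq_norm] using hsep x y hxy)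
    (fun x y hp => (EuclideanSpace.dist_eq_dist_natAdd_of_castAdd_eq (WithLp.toLp_injective 2 hp)).le)
    (fun x => by simpa only [dist_eq_norm] using happrox x)

/-- Perturbation preserving injectivity: if `f = f₁ ⊕ f₂` is continuous, `f₁` is
injective on every ball of radius `δ`, the images under `f` of `δ`-separated
points are `μ`-separated, and `g₂` is a `μ/3`-approximation of `f₂`, then
`f₁ ⊕ g₂` is injective. -/
theorem concat_perturbation_injective (a b : ℕ) (K : Type*) [MetricSpace K]
    (f : K → EuclideanSpace ℝ (Fin (a + b)))
    (hf : Continuous f)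
    (δ μ : ℝ) (hδ : 0 < δ) (hμ : 0 < μ)
    (hloc : ∀ x y : K, dist x y < δ →
      (fun i : Fin a => f x (Fin.castAdd b i)) = (fun i : Fin a => f y (Fin.castAdd b i)) →
      x = y)
    (hsep : ∀ x y : K, δ ≤ dist x y → μ < ‖f x - f y‖)
    (g₂ : K → EuclideanSpace ℝ (Fin b))
    (happrox : ∀ x : K,
      ‖(show EuclideanSpace ℝ (Fin b) from WithLp.toLp 2 (fun i : Fin b => f x (Fin.natAdd a i))) - g₂ x‖
        < μ / 3) :
    Function.Injective (fun x : K =>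
      ((show EuclideanSpace ℝ (Fin a) from WithLp.toLp 2 (fun i : Fin a => f x (Fin.castAdd b i))),
        g₂ x)) :=
  concat_perturbation_injective_general a b K f δ μ hloc hsep g₂ happrox
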